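/- Let Ω_n ⊂ Ĉ be domains with ∞ ∈ Ω_n, set E_n = Ĉ \ Ω_n, and suppose the compact sets E_n ⊂ ℂ converge in the Hausdorff sense (with respect to the Euclidean metric) to a compact set E ⊂ ℂ. Let Ω be the connected component of Ĉ \ E containing ∞. Then Ω is the ∞-kernel of the sequence (Ω_n), and hence (Ω_n) converges to Ω in the Carathéodory sense with base at ∞. -/

import Mathlib

open Set Metric Filter Topology
open scoped ENNReal

noncomputable section

/-- The `∞`-kernel of a sequence of domains in the Riemann sphere: the union of all domains `U`
containing `∞` each of whose compact subsets lies in `Ωs n` for all sufficiently large `n`. -/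
def kernelAtInfty (Ωs : ℕ → Set (OnePoint ℂ)) : Set (OnePoint ℂ) :=
  ⋃₀ {U : Set (OnePoint ℂ) | IsOpen U ∧ IsConnected U ∧ OnePoint.infty ∈ U ∧
    ∀ K : Set (OnePoint ℂ), K ⊆ U → IsCompact K → ∀ᶠ n in Filter.atTop, K ⊆ Ωs n}

/-! Hausdorff convergence `E_n → E` means that, for every `δ > 0`, eventually `E_n` lies in the
`δ`-neighbourhood of `E` and `E` in the `δ`-neighbourhood of `E_n`. By the first inclusion a compact
set disjoint from `E`, being at positive distance from it, eventually misses `E_n`; hence the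
component `Ω` belongs to the kernel. By the second, a domain in the kernel cannot contain a point of
`E`, since a small closed disc around that point would eventually meet `E_n`; so every such domain is
a connected subset of `Ĉ \ E` containing `∞`, hence lies in `Ω`. Subsequences inherit the
hypothesis, so they have the same kernel. -/

namespace Metric

variable {ι α : Type*} [PseudoEMetricSpace α] {s t : Set α} {δ : ℝ}

theorem subset_thickening_of_hausdorffEDist_lt (h : hausdorffEDist s t < ENNReal.ofReal δ) :
    s ⊆ thickening δ t := fun _ hx ↦
  mem_thickening_iff_infEDist_lt.2 ((infEDist_le_hausdorffEDist_of_mem hx).trans_lt h)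

theorem eventually_subset_thickening_of_tendsto_hausdorffEDist {l : Filter ι} {s : ι → Set α}
    (h : Tendsto (fun i ↦ hausdorffEDist (s i) t) l (𝓝 0)) (hδ : 0 < δ) :
    ∀ᶠ i in l, s i ⊆ thickening δ t ∧ t ⊆ thickening δ (s i) := by
  filter_upwards [h.eventually_lt_const (ENNReal.ofReal_pos.2 hδ)] with i hi
  exact ⟨subset_thickening_of_hausdorffEDist_lt hi,
    subset_thickening_of_hausdorffEDist_lt (by rwa [hausdorffEDist_comm] at hi)⟩

end Metric

-- `Ĉ` is a `2`-sphere; local connectedness makes the components of the open set `Ĉ \ E` open.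
instance OnePoint.locallyConnectedSpace_of_finiteDimensional {V : Type*} [AddCommGroup V]
    [Module ℝ V] [FiniteDimensional ℝ V] [TopologicalSpace V] [IsTopologicalAddGroup V]
    [ContinuousSMul ℝ V] [T2Space V] : LocallyConnectedSpace (OnePoint V) :=
  have := ChartedSpace.locallyConnectedSpace (EuclideanSpace ℝ (Fin (Module.finrank ℝ V)))
    (sphere (0 : EuclideanSpace ℝ (Fin (Module.finrank ℝ V + 1))) 1)
  (onePointEquivSphereOfFinrankEq (Fintype.card_fin _).symm).locallyConnectedSpace

section HausdorffLimit

variable {ι X : Type*} [MetricSpace X] {l : Filter ι} {Ωs : ι → Set (OnePoint X)} {E : Set X}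

theorem eventually_subset_of_disjoint_image_coe [LocallyCompactSpace X] (hinf : ∀ i, OnePoint.infty ∈ Ωs i)
    (hE : IsCompact E)
    (hconv : Tendsto (fun i ↦ hausdorffEDist {z : X | (z : OnePoint X) ∉ Ωs i} E) l (𝓝 0))
    {K : Set (OnePoint X)} (hK : IsCompact K) (hKE : Disjoint K ((↑) '' E)) :
    ∀ᶠ i in l, K ⊆ Ωs i := by
  have hKX : IsClosed (((↑) : X → OnePoint X) ⁻¹' K) :=
    hK.isClosed.preimage OnePoint.continuous_coe
  have hEK : E ⊆ (((↑) : X → OnePoint X) ⁻¹' K)ᶜ := fun z hz hzK ↦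
    hKE.notMem_of_mem_left hzK (mem_image_of_mem _ hz)
  obtain ⟨δ, hδ, hδE⟩ := hE.exists_thickening_subset_open hKX.isOpen_compl hEK
  filter_upwards [eventually_subset_thickening_of_tendsto_hausdorffEDist hconv hδ]
    with i hi
  rintro (_ | z) hz
  · exact hinf i
  · by_contra hzi
    exact hδE (hi.1 hzi) hz

theorem disjoint_image_coe_of_forall_eventually_subset [ProperSpace X] [l.NeBot]
    (hconv : Tendsto (fun i ↦ hausdorffEDist {z : X | (z : OnePoint X) ∉ Ωs i} E) l (𝓝 0))
    {U : Set (OnePoint X)} (hU : IsOpen U)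
    (hUK : ∀ K ⊆ U, IsCompact K → ∀ᶠ i in l, K ⊆ Ωs i) :
    Disjoint U ((↑) '' E) := by
  refine disjoint_right.2 ?_
  rintro _ ⟨z, hzE, rfl⟩ hzU
  obtain ⟨r, hr, hrU⟩ := nhds_basis_closedBall.mem_iff.1
    ((hU.preimage OnePoint.continuous_coe).mem_nhds hzU)
  obtain ⟨i, hdisc, -, hEi⟩ := ((hUK _ (image_subset_iff.2 hrU)
    ((isCompact_closedBall z r).image OnePoint.continuous_coe)).and
    (eventually_subset_thickening_of_tendsto_hausdorffEDist hconv hr)).exists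
  obtain ⟨w, hwi, hzw⟩ := mem_thickening_iff.1 (hEi hzE)
  exact hwi (hdisc (mem_image_of_mem _ (mem_closedBall_comm.1 hzw.le)))

end HausdorffLimit

theorem kernelAtInfty_eq_connectedComponentIn {Ωs : ℕ → Set (OnePoint ℂ)}
    (hinf : ∀ n, OnePoint.infty ∈ Ωs n) {E : Set ℂ} (hE : IsCompact E)
    (hconv : Tendsto
      (fun n ↦ hausdorffEDist {z : ℂ | (z : OnePoint ℂ) ∉ Ωs n} E) atTop (𝓝 0)) :
    kernelAtInfty Ωs = connectedComponentIn ((↑) '' E)ᶜ OnePoint.infty := by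
  have hE' : IsOpen (((↑) : ℂ → OnePoint ℂ) '' E)ᶜ :=
    (hE.image OnePoint.continuous_coe).isClosed.isOpen_compl
  have hinfE : OnePoint.infty ∈ (((↑) : ℂ → OnePoint ℂ) '' E)ᶜ := OnePoint.infty_notMem_image_coe
  refine Subset.antisymm (sUnion_subset ?_) (subset_sUnion_of_mem ?_)
  · rintro U ⟨hUo, hUc, hU, hUK⟩
    exact hUc.isPreconnected.subset_connectedComponentIn hU
      (disjoint_image_coe_of_forall_eventually_subset hconv hUo hUK).subset_compl_right
  · refine ⟨hE'.connectedComponentIn, isConnected_connectedComponentIn_iff.2 hinfE,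
      mem_connectedComponentIn hinfE, fun K hK hKc ↦ ?_⟩
    exact eventually_subset_of_disjoint_image_coe hinf hE hconv hKc
      (subset_compl_iff_disjoint_right.1 (hK.trans (connectedComponentIn_subset _ _)))

theorem statement_7 (Ωs : ℕ → Set (OnePoint ℂ))
    (hdom : ∀ n, IsOpen (Ωs n) ∧ IsConnected (Ωs n) ∧ OnePoint.infty ∈ Ωs n)
    (E : Set ℂ) (hE : IsCompact E)
    (hconv : Tendsto
      (fun n => EMetric.hausdorffEdist {z : ℂ | (z : OnePoint ℂ) ∉ Ωs n} E) atTop (nhds 0))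
    (Ω : Set (OnePoint ℂ))
    (hΩ : Ω = connectedComponentIn ((fun z : ℂ => (z : OnePoint ℂ)) '' E)ᶜ OnePoint.infty) :
    kernelAtInfty Ωs = Ω ∧
      ∀ φ : ℕ → ℕ, StrictMono φ → kernelAtInfty (Ωs ∘ φ) = Ω := by
  have hinf n : OnePoint.infty ∈ Ωs n := (hdom n).2.2
  subst hΩ
  exact ⟨kernelAtInfty_eq_connectedComponentIn hinf hE hconv, fun φ hφ ↦
    kernelAtInfty_eq_connectedComponentIn (Ωs := Ωs ∘ φ) (fun n ↦ hinf (φ n)) hE (hconv.comp hφ.tendsto_atTop)⟩
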